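/- arXiv:math/0410389 — 2 statements merged into one kernel-verified Lean document; each statement's English description precedes it below -/
import Mathlib

section
/- Let q > 1 be real, λ = q − q^{−1}, γ ∈ ℝ, and let ε be a nonzero complex number. Then the function g(x) = ₁φ₁(−ε^{−1}; q^{−2}; q^{−4}, ε q^{−2γ−3} λ² x²) satisfies, for every real x, the reduced eigenvalue equation 0 = g(x)·(q + q^{−1} − ε q^{−2γ} λ² x²) − q^{−1} g(q² x) − q g(q^{−2} x)·(1 + q^{−2γ−1} λ² x²). -/
/-!
Writing `₁φ₁(a;c;p,z) = ∑ cⱼ zʲ`, the coefficients satisfy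
`cⱼ₊₁ (1 - pʲ⁺¹)(1 - c pʲ) = -(1 - a pʲ) pʲ cⱼ`. Summed against `zʲ⁺¹` this is the second-order
q-difference equation `p f(z) - (p + c) f(pz) + c f(p²z) = -pz (f(pz) - a f(p²z))`.
With `p = q⁻⁴`, `c = q⁻²`, `a = -ε⁻¹` and `z = ε q^{-2γ-3} λ² x²`, the dilations `x ↦ q^{±2} x`
become `z ↦ q^{±4} z`, and the q-difference equation at `q⁴ z` is the reduced eigenvalue equation.
-/

open scoped BigOperators

/-- The q-shifted factorial `(a;p)_n = ∏_{i=0}^{n-1} (1 - a p^i)`. -/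
noncomputable def qPoch (a p : ℂ) (n : ℕ) : ℂ :=
  ∏ i ∈ Finset.range n, (1 - a * p ^ i)

/-- The basic hypergeometric series
`₁φ₁(a;c;p,z) = ∑_{j=0}^∞ ((a;p)_j / ((p;p)_j (c;p)_j)) (-1)^j p^(j(j-1)/2) z^j`. -/
noncomputable def phi11 (a c p z : ℂ) : ℂ :=
  ∑' j : ℕ, qPoch a p j / (qPoch p p j * qPoch c p j) * (-1) ^ j *
    p ^ (j * (j - 1) / 2) * z ^ j

open Filter Topology

lemma qPoch_succ (a p : ℂ) (n : ℕ) : qPoch a p (n + 1) = qPoch a p n * (1 - a * p ^ n) :=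
  Finset.prod_range_succ _ _

lemma mul_pow_ne_one {𝕜 : Type*} [NormedDivisionRing 𝕜] {c p : 𝕜} (hc : ‖c‖ < 1) (hp : ‖p‖ ≤ 1)
    (k : ℕ) : c * p ^ k ≠ 1 := by
  intro h
  have : ‖c * p ^ k‖ < 1 := by
    rw [norm_mul, norm_pow]
    exact (mul_le_of_le_one_right (norm_nonneg c) (pow_le_one₀ (norm_nonneg p) hp)).trans_lt hc
  simp [h] at this

lemma Complex.ofReal_rpow_add_natCast {q : ℝ} (hq : 0 < q) (s : ℝ) (n : ℕ) :
    ((q ^ (s + n) : ℝ) : ℂ) = (q : ℂ) ^ n * ((q ^ s : ℝ) : ℂ) := by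
  rw [Real.rpow_add hq, Real.rpow_natCast]
  push_cast
  ring

namespace phi11

variable (a c p : ℂ)

noncomputable def coeff (j : ℕ) : ℂ :=
  qPoch a p j / (qPoch p p j * qPoch c p j) * (-1) ^ j * p ^ (j * (j - 1) / 2)

noncomputable def coeffRatio (j : ℕ) : ℂ :=
  -((1 - a * p ^ j) * p ^ j) / ((1 - p * p ^ j) * (1 - c * p ^ j))

lemma coeff_succ (j : ℕ) : coeff a c p (j + 1) = coeff a c p j * coeffRatio a c p j := by
  simp only [coeff, coeffRatio, qPoch_succ, Nat.triangle_succ, pow_add, pow_succ, div_eq_mul_inv,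
    mul_inv]
  ring

lemma tendsto_coeffRatio (hp : ‖p‖ < 1) : Tendsto (coeffRatio a c p) atTop (𝓝 0) := by
  have hpow : Tendsto (fun j : ℕ => p ^ j) atTop (𝓝 0) :=
    tendsto_pow_atTop_nhds_zero_of_norm_lt_one hp
  have h : Tendsto (coeffRatio a c p) atTop
      (𝓝 (-((1 - a * 0) * 0) / ((1 - p * 0) * (1 - c * 0)))) :=
    (((tendsto_const_nhds (x := (1 : ℂ))).sub (hpow.const_mul a)).mul hpow).neg.div
      (((tendsto_const_nhds (x := (1 : ℂ))).sub (hpow.const_mul p)).mul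
        ((tendsto_const_nhds (x := (1 : ℂ))).sub (hpow.const_mul c)))
      (by simp)
  simpa using h

lemma hasSum (hp : ‖p‖ < 1) (z : ℂ) :
    HasSum (fun j => coeff a c p j * z ^ j) (phi11 a c p z) := by
  refine Summable.hasSum (summable_of_ratio_norm_eventually_le (r := 1 / 2) (by norm_num) ?_)
  have hsmall : ∀ᶠ j in atTop, ‖coeffRatio a c p j * z‖ ≤ 1 / 2 := by
    have := ((tendsto_coeffRatio a c p hp).mul_const z).norm
    rw [zero_mul, norm_zero] at this
    exact this.eventually_le_const (by norm_num)
  filter_upwards [hsmall] with j hj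
  calc ‖coeff a c p (j + 1) * z ^ (j + 1)‖
        = ‖coeffRatio a c p j * z‖ * ‖coeff a c p j * z ^ j‖ := by
          rw [coeff_succ, pow_succ, ← norm_mul]
          congr 1
          ring
    _ ≤ 1 / 2 * ‖coeff a c p j * z ^ j‖ := by gcongr

lemma coeff_succ_mul (hp : ‖p‖ < 1) (hc : ∀ k : ℕ, c * p ^ k ≠ 1) (j : ℕ) :
    coeff a c p (j + 1) * ((1 - p * p ^ j) * (1 - c * p ^ j)) =
      -((1 - a * p ^ j) * p ^ j) * coeff a c p j := by
  have hp₁ : 1 - p * p ^ j ≠ 0 := sub_ne_zero.2 (mul_pow_ne_one hp hp.le j).symm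
  have hc₁ : 1 - c * p ^ j ≠ 0 := sub_ne_zero.2 (hc j).symm
  rw [coeff_succ, coeffRatio, mul_div_assoc', div_mul_cancel₀ _ (mul_ne_zero hp₁ hc₁)]
  ring

theorem q_difference_equation (hp : ‖p‖ < 1) (hc : ∀ k : ℕ, c * p ^ k ≠ 1) (z : ℂ) :
    p * phi11 a c p z - (p + c) * phi11 a c p (p * z) + c * phi11 a c p (p ^ 2 * z) =
      -(p * z) * (phi11 a c p (p * z) - a * phi11 a c p (p ^ 2 * z)) := by
  have hlhs : HasSum (fun j => coeff a c p j * z ^ j * ((1 - p ^ j) * (p - c * p ^ j)))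
      (p * phi11 a c p z - (p + c) * phi11 a c p (p * z) + c * phi11 a c p (p ^ 2 * z)) := by
    refine ((((hasSum a c p hp z).mul_left p).sub ((hasSum a c p hp (p * z)).mul_left (p + c))).add
      ((hasSum a c p hp (p ^ 2 * z)).mul_left c)).congr_fun fun j => ?_
    ring
  have hrhs : HasSum (fun j => coeff a c p j * (p * z) ^ j * (1 - a * p ^ j))
      (phi11 a c p (p * z) - a * phi11 a c p (p ^ 2 * z)) := by
    refine ((hasSum a c p hp (p * z)).sub ((hasSum a c p hp (p ^ 2 * z)).mul_left a)).congr_fun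
      fun j => ?_
    ring
  -- the `j = 0` term of `hlhs` vanishes, and the `(j + 1)`-st is `-pz` times the `j`-th of `hrhs`
  have hshift := (hasSum_nat_add_iff' 1).2 hlhs
  simp only [Finset.sum_range_one, pow_zero, sub_self, zero_mul, mul_zero, sub_zero] at hshift
  refine hshift.unique ((hrhs.mul_left (-(p * z))).congr_fun fun j => ?_)
  linear_combination (p * z ^ (j + 1)) * coeff_succ_mul a c p hp hc j

theorem reduced_eigenvalue_equation (Q z : ℂ) (hQ : 1 < ‖Q‖) :
    phi11 a (Q⁻¹ ^ 2) (Q⁻¹ ^ 4) z * (Q + Q⁻¹ - Q ^ 3 * z) -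
        Q⁻¹ * phi11 a (Q⁻¹ ^ 2) (Q⁻¹ ^ 4) (Q ^ 4 * z) -
        Q * phi11 a (Q⁻¹ ^ 2) (Q⁻¹ ^ 4) (Q⁻¹ ^ 4 * z) * (1 - a * Q ^ 2 * z) = 0 := by
  have hQ₀ : Q ≠ 0 := norm_pos_iff.1 (one_pos.trans hQ)
  have hpow_lt {n : ℕ} (hn : n ≠ 0) : ‖Q⁻¹ ^ n‖ < 1 := by
    rw [norm_pow, norm_inv]
    exact pow_lt_one₀ (inv_nonneg.2 (norm_nonneg Q)) (inv_lt_one_of_one_lt₀ hQ) hn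
  have h := q_difference_equation a (Q⁻¹ ^ 2) (Q⁻¹ ^ 4) (hpow_lt four_ne_zero)
    (mul_pow_ne_one (hpow_lt two_ne_zero) (hpow_lt four_ne_zero).le) (Q ^ 4 * z)
  rw [show Q⁻¹ ^ 4 * (Q ^ 4 * z) = z by field_simp,
    show (Q⁻¹ ^ 4) ^ 2 * (Q ^ 4 * z) = Q⁻¹ ^ 4 * z by field_simp] at h
  field_simp at h ⊢
  linear_combination -h

end phi11

/-- The function `g(x) = ₁φ₁(-ε⁻¹; q⁻²; q⁻⁴, ε q^{-2γ-3} λ² x²)` satisfies the reduced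
eigenvalue equation
`0 = g(x)(q + q⁻¹ - ε q^{-2γ} λ² x²) - q⁻¹ g(q²x) - q g(q⁻²x)(1 + q^{-2γ-1} λ² x²)`
for every real `x`, where `λ = q - q⁻¹`. -/
theorem even_solution (q γ : ℝ) (hq : 1 < q) (ε : ℂ) (hε : ε ≠ 0)
    (g : ℝ → ℂ)
    (hg : ∀ x : ℝ, g x = phi11 (-ε⁻¹) ((q : ℂ) ^ (-2 : ℤ)) ((q : ℂ) ^ (-4 : ℤ))
      (ε * ((q ^ (-2 * γ - 3) : ℝ) : ℂ) * ((q - q⁻¹ : ℝ) : ℂ) ^ 2 * (x : ℂ) ^ 2)) :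
    ∀ x : ℝ,
      0 = g x * ((q : ℂ) + (q : ℂ)⁻¹ -
            ε * ((q ^ (-2 * γ) : ℝ) : ℂ) * ((q - q⁻¹ : ℝ) : ℂ) ^ 2 * (x : ℂ) ^ 2) -
        (q : ℂ)⁻¹ * g (q ^ 2 * x) -
        (q : ℂ) * g (q⁻¹ ^ 2 * x) *
          (1 + ((q ^ (-2 * γ - 1) : ℝ) : ℂ) * ((q - q⁻¹ : ℝ) : ℂ) ^ 2 * (x : ℂ) ^ 2) := by
  intro x
  have hq0 : 0 < q := one_pos.trans hq
  set R : ℂ := ((q ^ (-2 * γ - 3) : ℝ) : ℂ)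
  set L : ℂ := ((q - q⁻¹ : ℝ) : ℂ)
  have hF (y : ℝ) :
      g y = phi11 (-ε⁻¹) ((q : ℂ)⁻¹ ^ 2) ((q : ℂ)⁻¹ ^ 4) (ε * R * L ^ 2 * (y : ℂ) ^ 2) := by
    rw [hg, zpow_neg, zpow_neg, zpow_ofNat, zpow_ofNat, inv_pow, inv_pow]
  have hup : ε * R * L ^ 2 * ((q ^ 2 * x : ℝ) : ℂ) ^ 2 =
      (q : ℂ) ^ 4 * (ε * R * L ^ 2 * (x : ℂ) ^ 2) := by
    push_cast; ring
  have hdown : ε * R * L ^ 2 * ((q⁻¹ ^ 2 * x : ℝ) : ℂ) ^ 2 =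
      (q : ℂ)⁻¹ ^ 4 * (ε * R * L ^ 2 * (x : ℂ) ^ 2) := by
    push_cast; ring
  have hR₃ : ((q ^ (-2 * γ) : ℝ) : ℂ) = (q : ℂ) ^ 3 * R := by
    rw [← Complex.ofReal_rpow_add_natCast hq0]; congr 2; push_cast; ring
  have hR₂ : ((q ^ (-2 * γ - 1) : ℝ) : ℂ) = (q : ℂ) ^ 2 * R := by
    rw [← Complex.ofReal_rpow_add_natCast hq0]; congr 2; push_cast; ring
  have h := phi11.reduced_eigenvalue_equation (-ε⁻¹) q (ε * R * L ^ 2 * (x : ℂ) ^ 2)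
    (by rwa [Complex.norm_of_nonneg hq0.le])
  rw [← hup, ← hdown, ← hF, ← hF, ← hF] at h
  rw [hR₃, hR₂]
  linear_combination -h - (q : ℂ) ^ 3 * g (q⁻¹ ^ 2 * x) * R * L ^ 2 * (x : ℂ) ^ 2 *
    mul_inv_cancel₀ hε
end

section
/- Let q > 1 be real, n ∈ ℕ, and c > 0 real. Then (q^{4n+2};q^{−4})_∞ · (−q^{4n−4} c^{−1};q^{−4})_∞ · (−q^{−4n} c;q^{−4})_∞ = (1 − q²)(1 − q^{−2}) · (−c)^{−n} q^{4n²+2n} (q^{−6};q^{−4})_n · (q^{−6};q^{−4})_∞ · (−c;q^{−4})_∞ · (−c^{−1} q^{−4};q^{−4})_∞. (This evaluates, up to the fixed constant (1 − q²)(1 − q^{−2}), the coefficient C_o of the odd-series expansion at the Fock points ε = −q^{−4n−2}, giving C_o proportional to (−c)^{−n} q^{4n²+2n} (q^{−6};q^{−4})_n.) -/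
/-!
Write `p = q⁻⁴`. The first two products on the left have arguments `b` with `a b pᵐ = p` for
`a = q⁻²`, `m = n + 1` and `a = -c`, `m = n` respectively. Splitting `(b;p)_∞` after `m` factors
and reading the `m` factors backwards gives `(b;p)_∞ = (-b)ᵐ p^(m choose 2) (a;p)_m (p/a;p)_∞`.
Then `(q⁻²;p)_{n+1} (q⁻²;p)_∞` supplies `(1 - q⁻²)² (q⁻⁶;p)_n (q⁻⁶;p)_∞`, the third product on
the left completes `(-c;p)_n` to `(-c;p)_∞`, and what is left is an identity of monomials in `q`
and `c`.
-/

open scoped BigOperators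

/-- The infinite q-shifted factorial `(a;p)_∞ = ∏_{i=0}^∞ (1 - a p^i)`. -/
noncomputable def qPochInf (a p : ℂ) : ℂ :=
  ∏' i : ℕ, (1 - a * p ^ i)

open Finset

lemma prod_range_pow {M : Type*} [CommMonoid M] (p : M) (m : ℕ) :
    ∏ j ∈ range m, p ^ j = p ^ m.choose 2 := by
  rw [prod_pow_eq_pow_sum, sum_range_id, Nat.choose_two_right]

lemma qPoch_succ_eq_one_sub_mul (a p : ℂ) (n : ℕ) :
    qPoch a p (n + 1) = (1 - a) * qPoch (a * p) p n := by
  simp only [qPoch, prod_range_succ', pow_succ, pow_zero, mul_one, mul_assoc, mul_comm]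

/-- `(b;p)_m` and `(a;p)_m` with `a b = p^(1-m)` have the same factors in reverse order, up to
the factors `-b pʲ`. -/
lemma qPoch_reflect {a b p : ℂ} (hp : p ≠ 0) (m : ℕ) (h : a * b * p ^ m = p) :
    qPoch b p m = (-b) ^ m * p ^ m.choose 2 * qPoch a p m := by
  have hb : b ≠ 0 := by rintro rfl; simp_all
  have hfactor (j : ℕ) : 1 - b * p ^ j = -b * p ^ j * (1 - (b * p ^ j)⁻¹) := by
    field_simp; ring
  have hreversed : qPoch a p m = ∏ j ∈ range m, (1 - (b * p ^ j)⁻¹) := by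
    rw [qPoch, ← prod_range_reflect]
    refine prod_congr rfl fun j hj ↦ ?_
    have ha : a = p / (b * p ^ m) := by field_simp; linear_combination h
    rw [ha, show m - 1 - j = m - (j + 1) by omega, pow_sub₀ p hp (by simpa using hj : j + 1 ≤ m)]
    field_simp; ring
  calc qPoch b p m = ∏ j ∈ range m, (-b * p ^ j * (1 - (b * p ^ j)⁻¹)) :=
        prod_congr rfl fun j _ ↦ hfactor j
    _ = _ := by
      rw [prod_mul_distrib, prod_mul_distrib, prod_const, card_range, prod_range_pow, hreversed]

lemma multipliable_one_sub_mul_pow (a : ℂ) {p : ℂ} (hp : ‖p‖ < 1) :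
    Multipliable fun i : ℕ ↦ 1 - a * p ^ i := by
  have hsum : Summable fun i : ℕ ↦ ‖-(a * p ^ i)‖ := by
    simpa only [norm_neg, norm_mul, norm_pow] using
      (summable_geometric_of_lt_one (norm_nonneg p) hp).mul_left ‖a‖
  simpa only [sub_eq_add_neg] using multipliable_one_add_of_summable hsum

lemma qPochInf_eq_qPoch_mul_qPochInf (a : ℂ) {p : ℂ} (hp : ‖p‖ < 1) (k : ℕ) :
    qPochInf a p = qPoch a p k * qPochInf (a * p ^ k) p := by
  have hshift (i : ℕ) : 1 - a * p ^ (i + k) = 1 - a * p ^ k * p ^ i := by ring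
  have hsplit := Multipliable.prod_mul_tprod_nat_mul' (f := fun i ↦ 1 - a * p ^ i) (k := k)
    (by simpa only [hshift] using multipliable_one_sub_mul_pow (a * p ^ k) hp)
  simp only [hshift] at hsplit
  exact hsplit.symm

lemma qPochInf_eq_one_sub_mul (a : ℂ) {p : ℂ} (hp : ‖p‖ < 1) :
    qPochInf a p = (1 - a) * qPochInf (a * p) p := by
  simpa [qPoch] using qPochInf_eq_qPoch_mul_qPochInf a hp 1

lemma qPochInf_reflect {a b p : ℂ} (hp₀ : p ≠ 0) (hp : ‖p‖ < 1) (m : ℕ)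
    (h : a * b * p ^ m = p) :
    qPochInf b p = (-b) ^ m * p ^ m.choose 2 * qPoch a p m * qPochInf (p / a) p := by
  have ha : a ≠ 0 := by rintro rfl; simp_all
  have htail : b * p ^ m = p / a := eq_div_of_mul_eq ha (by linear_combination h)
  rw [qPochInf_eq_qPoch_mul_qPochInf b hp m, qPoch_reflect hp₀ m h, htail]

lemma Nat.choose_two_succ_add_choose_two (n : ℕ) : (n + 1).choose 2 + n.choose 2 = n ^ 2 := by
  rw [Nat.choose_succ_succ', Nat.choose_one_right, add_assoc, ← two_mul, Nat.choose_two_right,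
    Nat.mul_div_cancel' (Nat.even_mul_pred_self n).two_dvd]
  cases n <;> simp; ring

lemma fock_prefactor_eq {Q c : ℂ} (hQ : Q ≠ 0) (hc : c ≠ 0) (n : ℕ) :
    (Q ^ (-4 : ℤ)) ^ (n + 1).choose 2 * (Q ^ (-4 : ℤ)) ^ n.choose 2 *
      ((1 - Q ^ (-2 : ℤ)) * (-Q ^ (4 * (n : ℤ) + 2)) ^ (n + 1) *
        (Q ^ (4 * (n : ℤ) - 4) * c⁻¹) ^ n) =
    (1 - Q ^ 2) * ((-c) ^ (-(n : ℤ)) * Q ^ (4 * (n : ℤ) ^ 2 + 2 * (n : ℤ))) := by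
  have hexp : 4 * (n : ℤ) ^ 2 + 2 * (n : ℤ) = ((4 * n ^ 2 + 2 * n : ℕ) : ℤ) := by push_cast; ring
  rw [← pow_add, Nat.choose_two_succ_add_choose_two, hexp, zpow_neg (-c), zpow_natCast,
    ← inv_pow, inv_neg]
  simp only [zpow_add₀ hQ, zpow_sub₀ hQ, zpow_neg, zpow_mul, zpow_natCast, zpow_ofNat, div_pow,
    mul_pow, neg_pow c⁻¹, inv_pow, ← pow_mul]
  field_simp
  ring

lemma qPochInf_zpow_four_mul_add_two {Q : ℂ} (hQ : Q ≠ 0) (hp : ‖Q ^ (-4 : ℤ)‖ < 1) (n : ℕ) :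
    qPochInf (Q ^ (4 * (n : ℤ) + 2)) (Q ^ (-4 : ℤ)) =
      (-Q ^ (4 * (n : ℤ) + 2)) ^ (n + 1) * (Q ^ (-4 : ℤ)) ^ (n + 1).choose 2 *
        ((1 - Q ^ (-2 : ℤ)) * qPoch (Q ^ (-6 : ℤ)) (Q ^ (-4 : ℤ)) n) *
        ((1 - Q ^ (-2 : ℤ)) * qPochInf (Q ^ (-6 : ℤ)) (Q ^ (-4 : ℤ))) := by
  set p := Q ^ (-4 : ℤ) with hp_def
  have hreflect := qPochInf_reflect (zpow_ne_zero _ hQ) hp (n + 1)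
    (a := Q ^ (-2 : ℤ)) (b := Q ^ (4 * (n : ℤ) + 2)) (by
      simp only [zpow_add₀ hQ, zpow_neg, zpow_mul, zpow_natCast, zpow_ofNat, inv_pow, ← pow_mul]
      field_simp; ring)
  have hp_div : p / Q ^ (-2 : ℤ) = Q ^ (-2 : ℤ) := by
    rw [hp_def, div_eq_iff (zpow_ne_zero _ hQ), ← zpow_add₀ hQ]; norm_num
  have hQ_mul : Q ^ (-2 : ℤ) * p = Q ^ (-6 : ℤ) := by
    rw [hp_def, ← zpow_add₀ hQ]; norm_num
  rwa [hp_div, qPoch_succ_eq_one_sub_mul, qPochInf_eq_one_sub_mul (Q ^ (-2 : ℤ)) hp,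
    hQ_mul] at hreflect

lemma qPochInf_neg_zpow_four_mul_sub_four_mul_inv {Q c : ℂ} (hQ : Q ≠ 0) (hc : c ≠ 0)
    (hp : ‖Q ^ (-4 : ℤ)‖ < 1) (n : ℕ) :
    qPochInf (-Q ^ (4 * (n : ℤ) - 4) * c⁻¹) (Q ^ (-4 : ℤ)) =
      (Q ^ (4 * (n : ℤ) - 4) * c⁻¹) ^ n * (Q ^ (-4 : ℤ)) ^ n.choose 2 *
        qPoch (-c) (Q ^ (-4 : ℤ)) n * qPochInf (-c⁻¹ * Q ^ (-4 : ℤ)) (Q ^ (-4 : ℤ)) := by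
  have hreflect := qPochInf_reflect (zpow_ne_zero _ hQ) hp n
    (a := -c) (b := -Q ^ (4 * (n : ℤ) - 4) * c⁻¹) (by
      simp only [zpow_sub₀ hQ, zpow_neg, zpow_mul, zpow_natCast, zpow_ofNat, inv_pow, ← pow_mul]
      field_simp)
  rwa [show -(-Q ^ (4 * (n : ℤ) - 4) * c⁻¹) = Q ^ (4 * (n : ℤ) - 4) * c⁻¹ by ring,
    show Q ^ (-4 : ℤ) / -c = -c⁻¹ * Q ^ (-4 : ℤ) by ring] at hreflect

/-- Evaluation (up to the fixed constant `(1-q²)(1-q⁻²)`) of the coefficient `C_o`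
at the Fock points `ε = -q^{-4n-2}`:
`(q^{4n+2};q⁻⁴)_∞ (-q^{4n-4}c⁻¹;q⁻⁴)_∞ (-q^{-4n}c;q⁻⁴)_∞
  = (1-q²)(1-q⁻²) (-c)^{-n} q^{4n²+2n} (q⁻⁶;q⁻⁴)_n (q⁻⁶;q⁻⁴)_∞ (-c;q⁻⁴)_∞ (-c⁻¹q⁻⁴;q⁻⁴)_∞`. -/
theorem Co_fock_evaluation (q : ℝ) (hq : 1 < q) (n : ℕ) (c : ℝ) (hc : 0 < c) :
    qPochInf ((q : ℂ) ^ (4 * (n : ℤ) + 2)) ((q : ℂ) ^ (-4 : ℤ)) *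
      qPochInf (-(q : ℂ) ^ (4 * (n : ℤ) - 4) * (c : ℂ)⁻¹) ((q : ℂ) ^ (-4 : ℤ)) *
      qPochInf (-(q : ℂ) ^ (-(4 * (n : ℤ))) * (c : ℂ)) ((q : ℂ) ^ (-4 : ℤ)) =
    (1 - (q : ℂ) ^ 2) * (1 - (q : ℂ) ^ (-2 : ℤ)) *
      ((-(c : ℂ)) ^ (-(n : ℤ)) * (q : ℂ) ^ (4 * (n : ℤ) ^ 2 + 2 * (n : ℤ)) *
        qPoch ((q : ℂ) ^ (-6 : ℤ)) ((q : ℂ) ^ (-4 : ℤ)) n *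
        qPochInf ((q : ℂ) ^ (-6 : ℤ)) ((q : ℂ) ^ (-4 : ℤ)) *
        qPochInf (-(c : ℂ)) ((q : ℂ) ^ (-4 : ℤ)) *
        qPochInf (-(c : ℂ)⁻¹ * (q : ℂ) ^ (-4 : ℤ)) ((q : ℂ) ^ (-4 : ℤ))) := by
  have hQ : (q : ℂ) ≠ 0 := Complex.ofReal_ne_zero.mpr (by positivity)
  have hc₀ : (c : ℂ) ≠ 0 := Complex.ofReal_ne_zero.mpr hc.ne'
  have hp : ‖(q : ℂ) ^ (-4 : ℤ)‖ < 1 := by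
    rw [norm_zpow, Complex.norm_real, Real.norm_of_nonneg (by positivity)]
    exact zpow_lt_one_of_neg₀ hq (by norm_num)
  have htail : -(c : ℂ) * ((q : ℂ) ^ (-4 : ℤ)) ^ n = -(q : ℂ) ^ (-(4 * (n : ℤ))) * c := by
    rw [← zpow_natCast, ← zpow_mul]; ring_nf
  rw [qPochInf_zpow_four_mul_add_two hQ hp, qPochInf_neg_zpow_four_mul_sub_four_mul_inv hQ hc₀ hp,
    qPochInf_eq_qPoch_mul_qPochInf (-(c : ℂ)) hp n, htail]
  set Q : ℂ := (q : ℂ)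
  set p := Q ^ (-4 : ℤ)
  linear_combination (1 - Q ^ (-2 : ℤ)) * qPoch (Q ^ (-6 : ℤ)) p n * qPochInf (Q ^ (-6 : ℤ)) p *
    qPoch (-(c : ℂ)) p n * qPochInf (-(c : ℂ)⁻¹ * p) p *
    qPochInf (-Q ^ (-(4 * (n : ℤ))) * c) p * fock_prefactor_eq hQ hc₀ n
end
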